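/- Let α ≥ 0, let x̃ : E → ℝ≥0 be capacities with x̃(e) ≥ α for every e ∈ H, let y be the induced tree-edge capacities, and let F ⊆ H. If ℓ is the number of shattered components of Q_F, then Σ_{f ∈ M^{-1}(F)} y(f) ≥ α · ℓ. -/

import Mathlib

open scoped Classical

/-- The edges of `H` with exactly one endpoint in `S` (the cut `δ_H(S)`).
Edges are abstract objects of type `E` with endpoint maps `g₁ g₂ : E → V`. -/
noncomputable def cutEdges {V E : Type*} (g₁ g₂ : E → V) (H : Finset E) (S : Finset V) :
    Finset E :=
  H.filter fun e => (g₁ e ∈ S) ≠ (g₂ e ∈ S)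

/-- `u` and `v` are connected by a path using only edges of `H`. -/
def ConnectedIn {V E : Type*} (g₁ g₂ : E → V) (H : Finset E) (u v : V) : Prop :=
  Relation.ReflTransGen (fun a b => ∃ e ∈ H, (g₁ e = a ∧ g₂ e = b) ∨ (g₁ e = b ∧ g₂ e = a)) u v

/-- `u` and `v` are `p`-edge-connected in `H`: for every `D ⊆ H` with `|D| ≤ p - 1`,
`u` and `v` are connected in `H \ D`. -/
def PEdgeConnected {V E : Type*} (g₁ g₂ : E → V) (p : ℕ) (H : Finset E) (u v : V) : Prop :=
  ∀ D : Finset E, D ⊆ H → D.card ≤ p - 1 → ConnectedIn g₁ g₂ (H \ D) u v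

/-- `u` and `v` are `(p,q)`-flex-connected in `H` (with unsafe edge set `Unsafe`):
for every `U ⊆ Unsafe` with `|U| ≤ q`, `u` and `v` are `p`-edge-connected in `H \ U`. -/
def FlexConnected {V E : Type*} (g₁ g₂ : E → V) (Unsafe : Finset E) (p q : ℕ)
    (H : Finset E) (u v : V) : Prop :=
  ∀ U : Finset E, U ⊆ Unsafe → U.card ≤ q → PEdgeConnected g₁ g₂ p (H \ U) u v

/-- `(t₁, t₂ : TE → TV)` describes a (multi)graph which is a tree: it is connected and
every edge is a bridge. -/
def IsTree' {TV TE : Type*} [Fintype TE] (t₁ t₂ : TE → TV) : Prop :=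
  (∀ a b : TV, ConnectedIn t₁ t₂ Finset.univ a b) ∧
    ∀ f : TE, ¬ ConnectedIn t₁ t₂ (Finset.univ \ {f}) (t₁ f) (t₂ f)

/-- `V_f`: the `M1`-images of the leaves (elements of `L`) lying in the connected component
of the tree with `f` deleted that contains the endpoint `t₁ f`. -/
noncomputable def compVerts {V TV TE : Type*} [Fintype TE] (t₁ t₂ : TE → TV)
    (M1 : TV → V) (L : Finset TV) (f : TE) : Finset V :=
  (L.filter fun a => ConnectedIn t₁ t₂ (Finset.univ \ {f}) a (t₁ f)).image M1

/-- The capacity `y(f) = Σ_{e ∈ δ_E(V_f)} x(e)` induced on a tree edge `f` by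
capacities `x` on the edges of `G`. -/
noncomputable def treeCap {V E TV TE : Type*} [Fintype E] [Fintype TE]
    (g₁ g₂ : E → V) (t₁ t₂ : TE → TV) (M1 : TV → V) (L : Finset TV)
    (x : E → NNReal) (f : TE) : NNReal :=
  ∑ e ∈ cutEdges g₁ g₂ Finset.univ (compVerts t₁ t₂ M1 L f), x e

/-- `M^{-1}(F)`: tree edges `f` with `M2(f) ∩ F ≠ ∅`. -/
noncomputable def Minv {E TE : Type*} [Fintype TE] (M2 : TE → Finset E) (F : Finset E) :
    Finset TE :=
  Finset.univ.filter fun f => (M2 f ∩ F).Nonempty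

/-- `M(E') = ⋃_{f ∈ E'} M2(f)`. -/
noncomputable def Mimg {E TE : Type*} (M2 : TE → Finset E) (E' : Finset TE) : Finset E :=
  E'.biUnion M2

/-- The connected component containing `v` of the graph on `V` with edge set `H`. -/
noncomputable def Qcomp {V E : Type*} [Fintype V] (g₁ g₂ : E → V) (H : Finset E) (v : V) :
    Finset V :=
  Finset.univ.filter fun u => ConnectedIn g₁ g₂ H u v

/-- A vertex set `Q` is shattered (w.r.t. the tree and `M^{-1}(F)`): the leaves whose
`M1`-images lie in `Q` are not all in a single connected component of the tree with the
edges of `M^{-1}(F)` deleted. -/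
def IsShattered {V E TV TE : Type*} [Fintype TE] (t₁ t₂ : TE → TV) (M1 : TV → V)
    (L : Finset TV) (M2 : TE → Finset E) (F : Finset E) (Q : Finset V) : Prop :=
  ∃ a ∈ L, ∃ b ∈ L, M1 a ∈ Q ∧ M1 b ∈ Q ∧
    ¬ ConnectedIn t₁ t₂ (Finset.univ \ Minv M2 F) a b

/-- `Z_F`: the pairs `(A ∪ Q_{s_i}, B ∪ Q_{t_i})` over `i ∈ [k]` and pairs `(A, B)`
partitioning the union of the shattered components of `(V, H \ F)`, each shattered
component lying entirely in `A` or entirely in `B`, such that the two sets of the pair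
are disjoint. -/
def ZF {V E TV TE : Type*} [Fintype V] [Fintype TE] (g₁ g₂ : E → V) (t₁ t₂ : TE → TV)
    (M1 : TV → V) (L : Finset TV) (M2 : TE → Finset E) {k : ℕ} (st : Fin k → V × V)
    (H F : Finset E) : Set (Finset V × Finset V) :=
  { P | ∃ i : Fin k, ∃ A B : Finset V,
      Disjoint A B ∧
      A ∪ B = Finset.univ.filter
        (fun v => IsShattered t₁ t₂ M1 L M2 F (Qcomp g₁ g₂ (H \ F) v)) ∧
      (∀ v : V, IsShattered t₁ t₂ M1 L M2 F (Qcomp g₁ g₂ (H \ F) v) →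
        Qcomp g₁ g₂ (H \ F) v ⊆ A ∨ Qcomp g₁ g₂ (H \ F) v ⊆ B) ∧
      P.1 = A ∪ Qcomp g₁ g₂ (H \ F) (st i).1 ∧
      P.2 = B ∪ Qcomp g₁ g₂ (H \ F) (st i).2 ∧
      Disjoint P.1 P.2 }

/-- The number of shattered connected components of `(V, H \ F)`. -/
noncomputable def shatteredCount {V E TV TE : Type*} [Fintype V] [Fintype TE]
    (g₁ g₂ : E → V) (t₁ t₂ : TE → TV) (M1 : TV → V) (L : Finset TV)
    (M2 : TE → Finset E) (H F : Finset E) : ℕ :=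
  ((Finset.univ.image fun v => Qcomp g₁ g₂ (H \ F) v).filter
    fun Q => IsShattered t₁ t₂ M1 L M2 F Q).card

/-!
A shattered component `Q` contains leaves `a`, `b` that `M⁻¹(F)` separates in the tree. Since
`𝒯` is a tree, a single edge `f ∈ M⁻¹(F)` already separates them, so `V_f` contains `M1 a`
but not `M1 b`. A path from `M1 a` to `M1 b` inside `Q` then leaves `V_f` through an edge
`e ∈ H ∖ F` incident to `Q`; the pair `(f, e)` contributes `x̃(e) ≥ α` to
`∑_{f ∈ M⁻¹(F)} y(f)`, and distinct components give distinct pairs because `e` determines `Q`.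
-/

open Finset

theorem Finset.card_nsmul_le_sum_of_surjOn {ι κ R : Type*} [AddCommMonoid R] [Preorder R]
    [CanonicallyOrderedAdd R] [AddLeftMono R] {s : Finset ι} {t : Finset κ} (φ : κ → ι)
    (w : κ → R) (a : R) (h : Set.SurjOn φ ↑{k ∈ t | a ≤ w k} ↑s) :
    #s • a ≤ ∑ k ∈ t, w k :=
  calc #s • a ≤ #{k ∈ t | a ≤ w k} • a :=
        nsmul_le_nsmul_left zero_le (card_le_card_of_surjOn φ h)
    _ ≤ ∑ k ∈ t with a ≤ w k, w k := card_nsmul_le_sum _ _ _ fun _ hk => (mem_filter.1 hk).2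
    _ ≤ ∑ k ∈ t, w k := sum_le_sum_of_subset (filter_subset _ _)

namespace ConnectedIn

variable {V E : Type*} {g₁ g₂ : E → V} {W W' : Finset E} {u v w : V}

theorem refl : ConnectedIn g₁ g₂ W u u := Relation.ReflTransGen.refl

theorem symm (h : ConnectedIn g₁ g₂ W u v) : ConnectedIn g₁ g₂ W v u := by
  induction h with
  | refl => exact refl
  | tail _ hstep ih =>
    obtain ⟨e, he, hends⟩ := hstep
    exact Relation.ReflTransGen.head ⟨e, he, hends.symm⟩ ih

theorem mono (hW : W ⊆ W') (h : ConnectedIn g₁ g₂ W u v) : ConnectedIn g₁ g₂ W' u v :=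
  Relation.ReflTransGen.mono (fun _ _ ⟨e, he, hends⟩ => ⟨e, hW he, hends⟩) _ _ h

theorem exists_mem_cutEdges {S : Finset V} (h : ConnectedIn g₁ g₂ W u w) (hu : u ∈ S)
    (hw : w ∉ S) : ∃ e ∈ cutEdges g₁ g₂ W S, ConnectedIn g₁ g₂ W u (g₁ e) := by
  induction h with
  | refl => exact absurd hu hw
  | @tail v w huv hstep ih =>
    by_cases hv : v ∈ S
    · obtain ⟨e, he, ⟨rfl, rfl⟩ | ⟨rfl, rfl⟩⟩ := hstep
      · exact ⟨e, mem_filter.2 ⟨he, by simp [hv, hw]⟩, huv⟩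
      · exact ⟨e, mem_filter.2 ⟨he, by simp [hv, hw]⟩,
          huv.tail ⟨e, he, .inr ⟨rfl, rfl⟩⟩⟩
    · exact ih hv

end ConnectedIn

theorem mem_Qcomp {V E : Type*} [Fintype V] {g₁ g₂ : E → V} {H : Finset E} {u v : V} :
    u ∈ Qcomp g₁ g₂ H v ↔ ConnectedIn g₁ g₂ H u v := by
  simp [Qcomp]

theorem Qcomp_eq_of_connectedIn {V E : Type*} [Fintype V] {g₁ g₂ : E → V} {H : Finset E}
    {u v : V} (h : ConnectedIn g₁ g₂ H u v) : Qcomp g₁ g₂ H u = Qcomp g₁ g₂ H v := by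
  ext w
  simp only [mem_Qcomp]
  exact ⟨fun hw => hw.trans h, fun hw => hw.trans h.symm⟩

section TreeSides

variable {TV TE : Type*} [Fintype TE] {t₁ t₂ : TE → TV} {f : TE} {u v a b : TV}

/-- The condition selecting the leaves whose images form `V_f` in `compVerts`. -/
def OnFstSide (t₁ t₂ : TE → TV) (f : TE) (v : TV) : Prop :=
  ConnectedIn t₁ t₂ (univ \ {f}) v (t₁ f)

noncomputable def nearEnd (t₁ t₂ : TE → TV) (f : TE) (v : TV) : TV :=
  if OnFstSide t₁ t₂ f v then t₁ f else t₂ f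

theorem onFstSide_iff_of_connectedIn {W : Finset TE} (hf : f ∉ W)
    (h : ConnectedIn t₁ t₂ W u v) : OnFstSide t₁ t₂ f u ↔ OnFstSide t₁ t₂ f v := by
  have h' : ConnectedIn t₁ t₂ (univ \ {f}) u v :=
    h.mono fun e he => mem_sdiff.2 ⟨mem_univ e, fun hef => hf (mem_singleton.1 hef ▸ he)⟩
  exact ⟨h'.symm.trans, h'.trans⟩

theorem nearEnd_congr (h : OnFstSide t₁ t₂ f u ↔ OnFstSide t₁ t₂ f v) :
    nearEnd t₁ t₂ f u = nearEnd t₁ t₂ f v := by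
  simp only [nearEnd, h]

theorem nearEnd_of_endpoint (htree : IsTree' t₁ t₂) (hv : v = t₁ f ∨ v = t₂ f) :
    nearEnd t₁ t₂ f v = v := by
  rcases hv with rfl | rfl
  · exact if_pos .refl
  · exact if_neg fun h => htree.2 f h.symm

theorem ConnectedIn.erase_or (htree : IsTree' t₁ t₂) {W : Finset TE}
    (h : ConnectedIn t₁ t₂ W a b) :
    ConnectedIn t₁ t₂ (W.erase f) a b ∨
      ConnectedIn t₁ t₂ (W.erase f) a (nearEnd t₁ t₂ f a) ∧
        ConnectedIn t₁ t₂ (W.erase f) (nearEnd t₁ t₂ f b) b := by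
  have hf : f ∉ W.erase f := notMem_erase f W
  -- each crossing of `f` ends at an endpoint of `f`, which is its own `nearEnd`
  induction h with
  | refl => exact .inl .refl
  | @tail u w _ hstep ih =>
    obtain ⟨e, he, hends⟩ := hstep
    have hu : u = t₁ e ∨ u = t₂ e := by rcases hends with ⟨h, -⟩ | ⟨-, h⟩ <;> simp [h]
    have hw : w = t₁ e ∨ w = t₂ e := by rcases hends with ⟨-, h⟩ | ⟨h, -⟩ <;> simp [h]
    by_cases hef : e = f
    · subst hef
      refine .inr ⟨?_, by rw [nearEnd_of_endpoint htree hw]; exact .refl⟩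
      rcases ih with hau | ⟨hau, -⟩
      · rwa [nearEnd_congr (onFstSide_iff_of_connectedIn hf hau), nearEnd_of_endpoint htree hu]
      · exact hau
    · have huw : ConnectedIn t₁ t₂ (W.erase f) u w :=
        Relation.ReflTransGen.single ⟨e, mem_erase.2 ⟨hef, he⟩, hends⟩
      rcases ih with hau | ⟨hau, hub⟩
      · exact .inl (hau.trans huw)
      · rw [← nearEnd_congr (onFstSide_iff_of_connectedIn hf huw)]
        exact .inr ⟨hau, hub.trans huw⟩

theorem connectedIn_univ_sdiff_of_forall_onFstSide_iff (htree : IsTree' t₁ t₂) (S : Finset TE)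
    (h : ∀ f ∈ S, OnFstSide t₁ t₂ f a ↔ OnFstSide t₁ t₂ f b) :
    ConnectedIn t₁ t₂ (univ \ S) a b := by
  induction S using Finset.induction_on with
  | empty => simpa using htree.1 a b
  | @insert f S _ ih =>
    rw [sdiff_insert]
    have hab := ih fun g hg => h g (mem_insert_of_mem hg)
    rcases hab.erase_or htree (f := f) with hab | ⟨ha, hb⟩
    · exact hab
    · rw [nearEnd_congr (h f (mem_insert_self f S))] at ha
      exact ha.trans hb

end TreeSides

theorem mem_compVerts_iff {V TV TE : Type*} [Fintype TE] {t₁ t₂ : TE → TV} {M1 : TV → V}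
    {L : Finset TV} (hinj : Set.InjOn M1 L) {f : TE} {a : TV} (ha : a ∈ L) :
    M1 a ∈ compVerts t₁ t₂ M1 L f ↔ OnFstSide t₁ t₂ f a := by
  simp only [compVerts, mem_image, mem_filter]
  constructor
  · rintro ⟨c, ⟨hc, hside⟩, hca⟩
    rwa [← hinj hc ha hca]
  · exact fun h => ⟨a, ⟨ha, h⟩, rfl⟩

theorem exists_mem_cutEdges_compVerts {V E TV TE : Type*} [Fintype TE] {g₁ g₂ : E → V}
    {t₁ t₂ : TE → TV} (htree : IsTree' t₁ t₂) {M1 : TV → V} {L : Finset TV}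
    (hinj : Set.InjOn M1 L) {S : Finset TE} {W : Finset E} {a b : TV} (ha : a ∈ L) (hb : b ∈ L)
    (hab : ConnectedIn g₁ g₂ W (M1 a) (M1 b)) (hsep : ¬ ConnectedIn t₁ t₂ (univ \ S) a b) :
    ∃ f ∈ S, ∃ e ∈ cutEdges g₁ g₂ W (compVerts t₁ t₂ M1 L f),
      ConnectedIn g₁ g₂ W (M1 a) (g₁ e) := by
  obtain ⟨f, hfS, hf⟩ :
      ∃ f ∈ S, ¬(OnFstSide t₁ t₂ f a ↔ OnFstSide t₁ t₂ f b) := by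
    by_contra! h
    exact hsep (connectedIn_univ_sdiff_of_forall_onFstSide_iff htree S h)
  rw [← mem_compVerts_iff hinj ha, ← mem_compVerts_iff hinj hb] at hf
  by_cases hai : M1 a ∈ compVerts t₁ t₂ M1 L f
  · have hbo : M1 b ∉ compVerts t₁ t₂ M1 L f := fun hbi => hf ⟨fun _ => hbi, fun _ => hai⟩
    obtain ⟨e, he, hae⟩ := hab.exists_mem_cutEdges hai hbo
    exact ⟨f, hfS, e, he, hae⟩
  · obtain ⟨e, he, hbe⟩ := hab.symm.exists_mem_cutEdges (not_iff.1 hf |>.1 hai) hai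
    exact ⟨f, hfS, e, he, hab.trans hbe⟩

theorem Minv_treeCap_ge_shatteredCount_general {V E TV TE : Type*}
    [Fintype V] [Fintype E] [Fintype TE]
    (g₁ g₂ : E → V) (t₁ t₂ : TE → TV) (htree : IsTree' t₁ t₂)
    (M1 : TV → V) (L : Finset TV) (hM1 : Set.BijOn M1 (↑L) Set.univ)
    (M2 : TE → Finset E)
    (α : NNReal) (x : E → NNReal) (H : Finset E) (hx : ∀ e ∈ H, α ≤ x e)
    (F : Finset E) :
    α * (shatteredCount g₁ g₂ t₁ t₂ M1 L M2 H F : NNReal) ≤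
      ∑ f ∈ Minv M2 F, treeCap g₁ g₂ t₁ t₂ M1 L x f := by
  simp only [mul_comm α, ← nsmul_eq_mul, shatteredCount, treeCap, sum_sigma']
  refine card_nsmul_le_sum_of_surjOn (fun p => Qcomp g₁ g₂ (H \ F) (g₁ p.2)) _ _ ?_
  intro Q hQ
  obtain ⟨hQ, a, ha, b, hb, hav, hbv, hsep⟩ := mem_filter.1 hQ
  obtain ⟨v, -, rfl⟩ := mem_image.1 hQ
  rw [mem_Qcomp] at hav hbv
  obtain ⟨f, hf, e, he, hae⟩ :=
    exists_mem_cutEdges_compVerts htree hM1.injOn ha hb (hav.trans hbv.symm) hsep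
  obtain ⟨heH, hcross⟩ := mem_filter.1 he
  exact ⟨⟨f, e⟩, mem_filter.2 ⟨mem_sigma.2 ⟨hf, mem_filter.2 ⟨mem_univ e, hcross⟩⟩,
    hx e (mem_sdiff.1 heH).1⟩, Qcomp_eq_of_connectedIn (hae.symm.trans hav)⟩

/-- If every edge of `H` has capacity at least `α` and `F ⊆ H`, then the tree edges of
`M⁻¹(F)` carry total induced capacity at least `α` times the number of shattered
components of `(V, H \ F)`. -/
theorem Minv_treeCap_ge_shatteredCount {V E TV TE : Type*}
    [Fintype V] [Fintype E] [Fintype TE]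
    (g₁ g₂ : E → V) (t₁ t₂ : TE → TV) (htree : IsTree' t₁ t₂)
    (M1 : TV → V) (L : Finset TV) (hM1 : Set.BijOn M1 (↑L) Set.univ)
    (M2 : TE → Finset E)
    (hM2 : ∀ f : TE, ConnectedIn g₁ g₂ (M2 f) (M1 (t₁ f)) (M1 (t₂ f)))
    (α : NNReal) (x : E → NNReal) (H : Finset E) (hx : ∀ e ∈ H, α ≤ x e)
    (F : Finset E) (hFH : F ⊆ H) :
    α * (shatteredCount g₁ g₂ t₁ t₂ M1 L M2 H F : NNReal) ≤
      ∑ f ∈ Minv M2 F, treeCap g₁ g₂ t₁ t₂ M1 L x f :=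
  Minv_treeCap_ge_shatteredCount_general g₁ g₂ t₁ t₂ htree M1 L hM1 M2 α x H hx F
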